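/- Let N ≥ 1 be a natural number, let a_{-N}, …, a_{-1}, a₀ be complex numbers, and let f : (0,∞) → ℂ be continuous. Suppose there are constants C > 0 and δ > 0 such that |f(t) − ∑_{k=1}^{N} a_{-k} t^{-k} − a₀| ≤ C·t for all 0 < t ≤ 1, and |f(t)| ≤ C·e^{-δ t} for all t ≥ 1. Then for every complex s with Re s > N the integral ∫₀^∞ f(t) t^{s-1} dt converges absolutely, and there exists a function g, analytic on {s ∈ ℂ : Re s > −1} \ {1, 2, …, N}, such that g(s) = Γ(s)⁻¹ · ∫₀^∞ f(t) t^{s-1} dt for all s with Re s > N, and g(0) = a₀. -/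

import Mathlib

/-!
Split `f = h + 𝟙_(0,1] P`, where `P(t) = ∑_{k=1}^N a_{-k} t^{-k} + a₀` is the singular part of the
short-time expansion. The remainder `h` is `O(t)` at `0` and decays exponentially, so its Mellin
transform is holomorphic on `Re s > -1`, while `𝟙_(0,1] P` has the explicit Mellin transform
`∑_{k=1}^N a_{-k}/(s-k) + a₀/s` for `Re s > N`. Multiplying by the entire function `Γ(s)⁻¹` and
using `Γ(s)⁻¹ / s = Γ(s+1)⁻¹` removes the pole at `0` and gives the value `a₀` there.
-/

open MeasureTheory Set Filter Topology Asymptotics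

theorem LocallyIntegrableOn.indicator {X E : Type*} [MeasurableSpace X] [TopologicalSpace X]
    [NormedAddCommGroup E] {μ : Measure X} {f : X → E} {s t : Set X}
    (hf : LocallyIntegrableOn f s μ) (ht : MeasurableSet t) :
    LocallyIntegrableOn (t.indicator f) s μ := fun x hx =>
  let ⟨U, hU, hfU⟩ := hf x hx
  ⟨U, hU, hfU.indicator ht⟩

section Mellin

variable {E : Type*} [NormedAddCommGroup E] [NormedSpace ℂ E]

theorem hasMellin_sum {ι : Type*} (u : Finset ι) {F : ι → ℝ → E} {s : ℂ} {m : ι → E}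
    (hF : ∀ i ∈ u, HasMellin (F i) s (m i)) :
    HasMellin (fun t => ∑ i ∈ u, F i t) s (∑ i ∈ u, m i) := by
  have hint : ∀ i ∈ u, IntegrableOn (fun t : ℝ => (t : ℂ) ^ (s - 1) • F i t) (Ioi 0) :=
    fun i hi => (hF i hi).1
  refine ⟨?_, ?_⟩
  · simp only [MellinConvergent, Finset.smul_sum]
    exact integrable_finsetSum u hint
  · simp only [mellin, Finset.smul_sum]
    rw [integral_finsetSum u hint]
    exact Finset.sum_congr rfl fun i hi => (hF i hi).2

theorem HasMellin.add {f g : ℝ → E} {s : ℂ} {m m' : E} (hf : HasMellin f s m)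
    (hg : HasMellin g s m') : HasMellin (fun t => f t + g t) s (m + m') := by
  simpa only [hf.2, hg.2] using hasMellin_add hf.1 hg.1

theorem HasMellin.const_smul {f : ℝ → E} {s : ℂ} {m : E} (hf : HasMellin f s m) (c : ℂ) :
    HasMellin (fun t => c • f t) s (c • m) := by
  simpa only [hf.2] using hasMellin_const_smul hf.1 c

theorem hasMellin_of_mellinConvergent_sub {f g : ℝ → E} {s : ℂ} {m : E}
    (hfg : MellinConvergent (f - g) s) (hg : HasMellin g s m) :
    HasMellin f s (mellin (f - g) s + m) := by
  simpa using HasMellin.add ⟨hfg, rfl⟩ hg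

end Mellin

theorem mellinConvergent_iff_integrableOn_mul {f : ℝ → ℂ} {s : ℂ} :
    MellinConvergent f s ↔ IntegrableOn (fun t : ℝ => f t * (t : ℂ) ^ (s - 1)) (Ioi 0) := by
  simp only [MellinConvergent, smul_eq_mul, mul_comm]

theorem mellin_eq_integral_mul (f : ℝ → ℂ) (s : ℂ) :
    mellin f s = ∫ t in Ioi (0 : ℝ), f t * (t : ℂ) ^ (s - 1) := by
  simp only [mellin, smul_eq_mul, mul_comm]

theorem hasMellin_zpow_Ioc (n : ℤ) {s : ℂ} (hs : 0 < s.re + n) :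
    HasMellin (indicator (Ioc 0 1) fun t : ℝ => (t : ℂ) ^ n) s (1 / (s + n)) := by
  simpa only [Complex.cpow_intCast] using hasMellin_cpow_Ioc (n : ℂ) (by simpa using hs)

/-- The singular part `∑_{k=1}^N a_{-k} t^{-k} + a₀` of a short-time expansion, with `a k`
standing for `a_{-k}`. -/
noncomputable def singularPart (N : ℕ) (a : ℕ → ℂ) (t : ℝ) : ℂ :=
  (∑ k ∈ Finset.Icc 1 N, a k * (t : ℂ) ^ (-(k : ℤ))) + a 0

section SingularPart

variable (N : ℕ) (a : ℕ → ℂ)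

theorem continuousOn_singularPart : ContinuousOn (singularPart N a) (Ioi 0) := by
  refine (continuousOn_finsetSum _ fun k _ => continuousOn_const.mul ?_).add continuousOn_const
  exact Complex.continuous_ofReal.continuousOn.zpow₀ _ fun t ht =>
    Or.inl (Complex.ofReal_ne_zero.2 (ne_of_gt ht))

theorem hasMellin_indicator_singularPart {s : ℂ} (hs : N < s.re) :
    HasMellin (indicator (Ioc 0 1) (singularPart N a)) s
      ((∑ k ∈ Finset.Icc 1 N, a k / (s - k)) + a 0 / s) := by
  have hsplit : indicator (Ioc 0 1) (singularPart N a) = fun t =>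
      (∑ k ∈ Finset.Icc 1 N, a k • indicator (Ioc 0 1) (fun t : ℝ => (t : ℂ) ^ (-(k : ℤ))) t) +
        a 0 • indicator (Ioc 0 1) (fun _ => (1 : ℂ)) t := by
    funext t
    by_cases ht : t ∈ Ioc 0 1 <;> simp [ht, singularPart]
  have hpoles : ∀ k ∈ Finset.Icc 1 N, HasMellin
      (fun t => a k • indicator (Ioc 0 1) (fun t : ℝ => (t : ℂ) ^ (-(k : ℤ))) t) s
      (a k / (s - k)) := by
    intro k hk
    have hkN : (k : ℝ) ≤ N := by exact_mod_cast (Finset.mem_Icc.1 hk).2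
    simpa [div_eq_mul_inv, sub_eq_add_neg] using
      (hasMellin_zpow_Ioc (-(k : ℤ)) (s := s) (by push_cast; linarith)).const_smul (a k)
  have hconst :
      HasMellin (fun t => a 0 • indicator (Ioc 0 1) (fun _ => (1 : ℂ)) t) s (a 0 / s) := by
    simpa [div_eq_mul_inv] using
      (hasMellin_one_Ioc (s := s) (by linarith [N.cast_nonneg (α := ℝ)])).const_smul (a 0)
  rw [hsplit]
  exact (hasMellin_sum _ hpoles).add hconst

end SingularPart

/-- The continuation of `Γ(s)⁻¹ 𝓜f(s)`, where `h = f - 𝟙_(0,1] P` with `P` the singular part of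
`f`. -/
noncomputable def zetaContinuation (N : ℕ) (a : ℕ → ℂ) (h : ℝ → ℂ) (s : ℂ) : ℂ :=
  (Complex.Gamma s)⁻¹ * (mellin h s + ∑ k ∈ Finset.Icc 1 N, a k / (s - k)) +
    a 0 * (Complex.Gamma (s + 1))⁻¹

section ZetaContinuation

variable {N : ℕ} {a : ℕ → ℂ} {h : ℝ → ℂ}

/-- Mathlib's junk value `Γ 0 = 0` agrees with the zero of the entire function `Γ(s)⁻¹` at `0`. -/
theorem zetaContinuation_zero : zetaContinuation N a h 0 = a 0 := by
  simp [zetaContinuation, Complex.Gamma_zero]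

theorem zetaContinuation_eq {f : ℝ → ℂ} {s : ℂ} (hs : s ≠ 0)
    (hf : HasMellin f s (mellin h s + ((∑ k ∈ Finset.Icc 1 N, a k / (s - k)) + a 0 / s))) :
    zetaContinuation N a h s = (Complex.Gamma s)⁻¹ * mellin f s := by
  rw [hf.2, zetaContinuation, Complex.Gamma_add_one s hs, mul_inv]
  ring

theorem analyticOnNhd_zetaContinuation {U : Set ℂ} (hU : IsOpen U)
    (hh : ∀ s ∈ U, DifferentiableAt ℂ (mellin h) s) :
    AnalyticOnNhd ℂ (zetaContinuation N a h) (U \ {s : ℂ | ∃ k : ℕ, 1 ≤ k ∧ k ≤ N ∧ s = k}) := by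
  have hpoles : {s : ℂ | ∃ k : ℕ, 1 ≤ k ∧ k ≤ N ∧ s = k} = (Nat.cast '' Icc 1 N : Set ℂ) := by
    ext s
    simp [eq_comm, and_assoc]
  rw [hpoles]
  refine DifferentiableOn.analyticOnNhd (fun s ⟨hsU, hsN⟩ => ?_)
    (hU.sdiff ((finite_Icc 1 N).image _).isClosed)
  have hsk : ∀ k ∈ Finset.Icc 1 N, s - k ≠ 0 := fun k hk =>
    sub_ne_zero.2 fun hs => hsN ⟨k, by simpa using hk, hs.symm⟩
  have hGamma := Complex.differentiable_one_div_Gamma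
  refine (DifferentiableAt.add ?_ ?_).differentiableWithinAt
  · exact (hGamma s).mul <| (hh s hsU).add <| DifferentiableAt.fun_sum fun k hk =>
      (differentiableAt_const _).div (differentiableAt_id.sub_const _) (hsk k hk)
  · exact ((hGamma.comp (differentiable_id.add_const 1)) s).const_mul _

end ZetaContinuation

theorem zeta_integral_analytic_continuation_general
    (N : ℕ) (a : ℕ → ℂ) (f : ℝ → ℂ)
    (hf : ContinuousOn f (Ioi 0)) (C δ : ℝ) (hδ : 0 < δ)
    (h0 : ∀ t : ℝ, 0 < t → t ≤ 1 →
      ‖f t - (∑ k ∈ Finset.Icc 1 N, a k * (t : ℂ) ^ (-(k : ℤ))) - a 0‖ ≤ C * t)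
    (hinf : ∀ t : ℝ, 1 ≤ t → ‖f t‖ ≤ C * Real.exp (-δ * t)) :
    (∀ s : ℂ, (N : ℝ) < s.re →
        IntegrableOn (fun t : ℝ => f t * (t : ℂ) ^ (s - 1)) (Ioi 0)) ∧
      ∃ g : ℂ → ℂ,
        AnalyticOnNhd ℂ g
          ({s : ℂ | -1 < s.re} \ {s : ℂ | ∃ k : ℕ, 1 ≤ k ∧ k ≤ N ∧ s = (k : ℂ)}) ∧
        (∀ s : ℂ, (N : ℝ) < s.re →
          g s = (Complex.Gamma s)⁻¹ * ∫ t in Ioi (0 : ℝ), f t * (t : ℂ) ^ (s - 1)) ∧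
        g 0 = a 0 := by
  set h := f - indicator (Ioc 0 1) (singularPart N a)
  have hloc : LocallyIntegrableOn h (Ioi 0) :=
    (hf.locallyIntegrableOn measurableSet_Ioi).sub
      (LocallyIntegrableOn.indicator
        ((continuousOn_singularPart N a).locallyIntegrableOn measurableSet_Ioi) measurableSet_Ioc)
  have htop : h =O[atTop] fun t => Real.exp (-δ * t) := IsBigO.of_bound C <| by
    filter_upwards [eventually_gt_atTop 1] with t ht
    simpa [h, indicator_of_notMem (fun hmem : t ∈ Ioc 0 1 => ht.not_ge hmem.2)] using hinf t ht.le
  have hbot : h =O[𝓝[>] 0] (· ^ (-(-1 : ℝ))) := IsBigO.of_bound C <| by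
    filter_upwards [Ioc_mem_nhdsGT one_pos] with t ht
    simpa [h, indicator_of_mem ht, singularPart, sub_sub, abs_of_pos ht.1] using h0 t ht.1 ht.2
  have hmellin (s : ℂ) (hs : N < s.re) := hasMellin_of_mellinConvergent_sub
    (mellinConvergent_of_isBigO_rpow_exp hδ hloc htop hbot (by linarith [N.cast_nonneg (α := ℝ)]))
    (hasMellin_indicator_singularPart N a hs)
  refine ⟨fun s hs => mellinConvergent_iff_integrableOn_mul.1 (hmellin s hs).1,
    zetaContinuation N a h, ?_, fun s hs => ?_, zetaContinuation_zero⟩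
  · exact analyticOnNhd_zetaContinuation (isOpen_lt continuous_const Complex.continuous_re)
      fun s hs => mellin_differentiableAt_of_isBigO_rpow_exp hδ hloc htop hbot hs
  · have hs0 : s ≠ 0 := by
      rintro rfl
      exact N.cast_nonneg.not_gt (by simpa using hs)
    rw [zetaContinuation_eq hs0 (hmellin s hs), mellin_eq_integral_mul]

/-- If a continuous function `f` on `(0,∞)` has a short-time expansion
`f(t) = ∑_{k=1}^N a_{-k} t^{-k} + a₀ + O(t)` and decays exponentially at infinity, then its
Mellin-type zeta integral `Γ(s)⁻¹ ∫₀^∞ f(t) t^{s-1} dt` converges absolutely for `Re s > N`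
and extends to a function `g` analytic on `{Re s > −1} \ {1, …, N}` with `g(0) = a₀`. -/
theorem zeta_integral_analytic_continuation
    (N : ℕ) (hN : 1 ≤ N) (a : ℕ → ℂ) (f : ℝ → ℂ)
    (hf : ContinuousOn f (Ioi 0)) (C δ : ℝ) (hC : 0 < C) (hδ : 0 < δ)
    (h0 : ∀ t : ℝ, 0 < t → t ≤ 1 →
      ‖f t - (∑ k ∈ Finset.Icc 1 N, a k * (t : ℂ) ^ (-(k : ℤ))) - a 0‖ ≤ C * t)
    (hinf : ∀ t : ℝ, 1 ≤ t → ‖f t‖ ≤ C * Real.exp (-δ * t)) :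
    (∀ s : ℂ, (N : ℝ) < s.re →
        IntegrableOn (fun t : ℝ => f t * (t : ℂ) ^ (s - 1)) (Ioi 0)) ∧
      ∃ g : ℂ → ℂ,
        AnalyticOnNhd ℂ g
          ({s : ℂ | -1 < s.re} \ {s : ℂ | ∃ k : ℕ, 1 ≤ k ∧ k ≤ N ∧ s = (k : ℂ)}) ∧
        (∀ s : ℂ, (N : ℝ) < s.re →
          g s = (Complex.Gamma s)⁻¹ * ∫ t in Ioi (0 : ℝ), f t * (t : ℂ) ^ (s - 1)) ∧
        g 0 = a 0 :=
  zeta_integral_analytic_continuation_general N a f hf C δ hδ h0 hinf
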